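/- For any hypothesis class H with Littlestone dimension L(H) = 1, there is a deterministic apple tasting learner making at most 1 + 2√T mistakes on any realizable stream of length T. -/

import Mathlib

/-- `ALShatter H w d` : the hypothesis class `H` shatters some Apple Littlestone tree of
width `w` and depth `d`. Width `0` means the path has already ended (took the maximal
number of right/1 edges), in which case shattering only requires a consistent hypothesis. -/
def ALShatter {X : Type*} : Set (X → Bool) → ℕ → ℕ → Prop
  | H, _, 0 => H.Nonempty
  | H, 0, _ + 1 => H.Nonempty
  | H, w + 1, d + 1 =>
      ∃ x : X, ALShatter {h | h ∈ H ∧ h x = false} (w + 1) d ∧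
               ALShatter {h | h ∈ H ∧ h x = true} w d

/-- The Apple Littlestone dimension of `H` at width `w`. -/
noncomputable def ALdim {X : Type*} (H : Set (X → Bool)) (w : ℕ) : ℕ∞ :=
  sSup {d : ℕ∞ | ∃ n : ℕ, ALShatter H w n ∧ d = (n : ℕ∞)}

/-- `LShatter H d` : `H` shatters some Littlestone tree of depth `d`. -/
def LShatter {X : Type*} : Set (X → Bool) → ℕ → Prop
  | H, 0 => H.Nonempty
  | H, d + 1 =>
      ∃ x : X, LShatter {h | h ∈ H ∧ h x = false} d ∧
               LShatter {h | h ∈ H ∧ h x = true} d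

/-- The Littlestone dimension of `H`. -/
noncomputable def Ldim {X : Type*} (H : Set (X → Bool)) : ℕ∞ :=
  sSup {d : ℕ∞ | ∃ n : ℕ, LShatter H n ∧ d = (n : ℕ∞)}

/-- The Effective width of `H`: the least width `w ≥ 1` at which the
Apple Littlestone dimension is finite. -/
noncomputable def EffW {X : Type*} (H : Set (X → Bool)) : ℕ∞ :=
  sInf {w : ℕ∞ | ∃ n : ℕ, 1 ≤ n ∧ ALdim H n ≠ ⊤ ∧ w = (n : ℕ∞)}

/-- The apple-tasting history produced by running the deterministic apple-tasting
learner B on stream x with true labels y: the label is recorded only on rounds where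
B predicts 1. -/
def atRun {X : Type*} (B : List (X × Option Bool) → X → Bool) (x : ℕ → X)
    (y : ℕ → Bool) : ℕ → List (X × Option Bool)
  | 0 => []
  | t + 1 =>
      let hist := atRun B x y t
      hist ++ [(x t, if B hist (x t) then some (y t) else none)]

/-!
Run the learner with threshold `r = ⌊√T⌋ + 1`. A false negative occurs only while the counter
of the target is below `r`, so there are at most `r` of them. A false positive at which the
negative side of the version space has at most one element leaves only the target in the
version space, after which there are no mistakes at all. Every other false positive eliminates
a hypothesis whose counter has reached `r`. Since `L(H) = 1`, at a round where the learner
predicts 0 the positive side of the version space has at most one element, so the round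
increments the counter of at most one surviving hypothesis. Hence the counters of the
eliminated hypotheses and of the target together sum to at most `T`, so
`r · #(eliminations) + #(false negatives) ≤ T`. The bound `1 + 2√T` follows.
-/

open Finset

section Littlestone

variable {X : Type*}

theorem LShatter.mono : ∀ {d : ℕ} {S S' : Set (X → Bool)}, S ⊆ S' → LShatter S d → LShatter S' d
  | 0, _, _, hS, h => Set.Nonempty.mono hS h
  | _ + 1, _, _, hS, ⟨a, h₀, h₁⟩ =>
      ⟨a, LShatter.mono (fun _ hg => ⟨hS hg.1, hg.2⟩) h₀,
        LShatter.mono (fun _ hg => ⟨hS hg.1, hg.2⟩) h₁⟩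

theorem LShatter.le_ldim {H : Set (X → Bool)} {d : ℕ} (h : LShatter H d) : (d : ℕ∞) ≤ Ldim H :=
  le_sSup ⟨d, h, rfl⟩

theorem not_lShatter_two_of_ldim_eq_one {H : Set (X → Bool)} (hL : Ldim H = 1) :
    ¬ LShatter H 2 := fun h => by simpa [hL] using h.le_ldim

theorem Set.Nontrivial.lShatter_one {S : Set (X → Bool)} (hS : S.Nontrivial) :
    LShatter S 1 := by
  obtain ⟨g₁, hg₁, g₂, hg₂, hne⟩ := hS
  obtain ⟨a, ha⟩ := Function.ne_iff.mp hne
  have side (b : Bool) : LShatter {g | g ∈ S ∧ g a = b} 0 := by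
    by_cases h₁ : g₁ a = b
    · exact ⟨g₁, hg₁, h₁⟩
    · exact ⟨g₂, hg₂, by cases b <;> cases h : g₁ a <;> simp_all⟩
  exact ⟨a, side false, side true⟩

theorem subsingleton_or_subsingleton_of_not_lShatter_two {S : Set (X → Bool)}
    (hS : ¬ LShatter S 2) (a : X) :
    {g ∈ S | g a = false}.Subsingleton ∨ {g ∈ S | g a = true}.Subsingleton := by
  by_contra! h
  exact hS ⟨a, h.1.lShatter_one, h.2.lShatter_one⟩

end Littlestone

theorem add_le_two_mul_sqrt {T a k : ℕ} (ha : a ≤ T.sqrt + 1) (hk : (T.sqrt + 1) * k + a ≤ T) :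
    (a + k : ℝ) ≤ 2 * √T := by
  have hlo : (T.sqrt : ℝ) ≤ √T := Real.nat_sqrt_le_real_sqrt
  have hhi : √T < T.sqrt + 1 := Real.real_sqrt_lt_nat_sqrt_succ
  have hsq : √T * √T = T := Real.mul_self_sqrt (Nat.cast_nonneg T)
  have ha' : (a : ℝ) ≤ T.sqrt + 1 := by exact_mod_cast ha
  have hk' : ((T.sqrt : ℝ) + 1) * k + a ≤ T := by exact_mod_cast hk
  have hn : (0 : ℝ) < T.sqrt + 1 := by positivity
  refine le_of_mul_le_mul_left ?_ hn
  nlinarith [Real.sqrt_nonneg T]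

namespace AppleTasting

variable {X : Type*}

open scoped Classical

def versionSpace (H : Set (X → Bool)) (hist : List (X × Option Bool)) : Set (X → Bool) :=
  {h ∈ H | ∀ p ∈ hist, ∀ b ∈ p.2, h p.1 = b}

/-- The paper's counter `C(h)`, read off the history: rounds whose label stayed hidden and on
which `h` predicted 1. -/
def rejectCount (hist : List (X × Option Bool)) (h : X → Bool) : ℕ :=
  hist.countP fun p => p.2.isNone && h p.1

/-- The paper's learner with threshold `r`. Writing `Vᵇ = {g ∈ versionSpace H hist | g a = b}`,
its condition `L(V⁰) = 0` is `V⁰.Subsingleton`, and requiring `V¹` to be nonempty makes it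
predict 0 when the version space is constant 0. -/
noncomputable def learner (H : Set (X → Bool)) (r : ℕ) (hist : List (X × Option Bool)) (a : X) :
    Bool :=
  decide ({g ∈ versionSpace H hist | g a = true}.Nonempty ∧
    ({g ∈ versionSpace H hist | g a = false}.Subsingleton ∨
      ∃ g ∈ versionSpace H hist, g a = true ∧ r ≤ rejectCount hist g))

def prediction (B : List (X × Option Bool) → X → Bool) (x : ℕ → X) (y : ℕ → Bool) (t : ℕ) :
    Bool :=
  B (atRun B x y t) (x t)

noncomputable def votes (H : Set (X → Bool)) (B : List (X × Option Bool) → X → Bool) (x : ℕ → X)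
    (y : ℕ → Bool) (T : ℕ) (g : X → Bool) : Finset ℕ :=
  {s ∈ range T | prediction B x y s = false ∧ g ∈ versionSpace H (atRun B x y s) ∧ g (x s) = true}

section Run

variable {B : List (X × Option Bool) → X → Bool} {x : ℕ → X} {y : ℕ → Bool}
  {H : Set (X → Bool)} {g : X → Bool}

theorem mem_versionSpace_atRun_succ {t : ℕ} :
    g ∈ versionSpace H (atRun B x y (t + 1)) ↔
      g ∈ versionSpace H (atRun B x y t) ∧ (prediction B x y t = true → g (x t) = y t) := by
  simp only [versionSpace, atRun, List.forall_mem_append, List.forall_mem_singleton]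
  cases hp : prediction B x y t <;> simp_all [prediction, and_assoc]

theorem antitone_versionSpace_atRun : Antitone fun t => versionSpace H (atRun B x y t) :=
  antitone_nat_of_succ_le fun _ _ hg => (mem_versionSpace_atRun_succ.mp hg).1

theorem mem_versionSpace_atRun {h : X → Bool} (hh : h ∈ H) (t : ℕ) :
    h ∈ versionSpace H (atRun B x (fun s => h (x s)) t) := by
  induction t with
  | zero => exact ⟨hh, by simp [atRun]⟩
  | succ t ih => exact mem_versionSpace_atRun_succ.mpr ⟨ih, fun _ => rfl⟩

theorem rejectCount_atRun_succ (t : ℕ) :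
    rejectCount (atRun B x y (t + 1)) g = rejectCount (atRun B x y t) g +
      if prediction B x y t = false ∧ g (x t) = true then 1 else 0 := by
  cases hp : prediction B x y t <;> cases hg : g (x t) <;>
    simp_all [rejectCount, atRun, prediction]

theorem rejectCount_atRun (t : ℕ) :
    rejectCount (atRun B x y t) g =
      #{s ∈ range t | prediction B x y s = false ∧ g (x s) = true} := by
  induction t with
  | zero => simp [rejectCount, atRun]
  | succ t ih =>
    rw [rejectCount_atRun_succ, ih, range_add_one, filter_insert]
    split_ifs <;> simp_all

theorem rejectCount_le_card_votes {t T : ℕ} (htT : t ≤ T)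
    (hg : g ∈ versionSpace H (atRun B x y t)) :
    rejectCount (atRun B x y t) g ≤ #(votes H B x y T g) := by
  rw [rejectCount_atRun]
  refine card_le_card fun s hs => ?_
  simp only [votes, mem_filter, mem_range] at hs ⊢
  exact ⟨by omega, hs.2.1, antitone_versionSpace_atRun hs.1.le hg, hs.2.2⟩

end Run

section Learner

variable {H : Set (X → Bool)} {r : ℕ} {hist : List (X × Option Bool)} {a : X}

theorem learner_eq_true_iff :
    learner H r hist a = true ↔ {g ∈ versionSpace H hist | g a = true}.Nonempty ∧
      ({g ∈ versionSpace H hist | g a = false}.Subsingleton ∨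
        ∃ g ∈ versionSpace H hist, g a = true ∧ r ≤ rejectCount hist g) := by
  simp [learner]

theorem learner_eq_false_of_forall (h : ∀ g ∈ versionSpace H hist, g a = false) :
    learner H r hist a = false := by
  rw [← Bool.not_eq_true, learner_eq_true_iff]
  rintro ⟨⟨g, hg, hga⟩, -⟩
  simp [h g hg] at hga

theorem rejectCount_lt_of_learner_eq_false (hp : learner H r hist a = false) {g : X → Bool}
    (hg : g ∈ versionSpace H hist) (hga : g a = true) : rejectCount hist g < r := by
  by_contra! hr
  exact Bool.false_ne_true <| hp.symm.trans <|
    learner_eq_true_iff.mpr ⟨⟨g, hg, hga⟩, .inr ⟨g, hg, hga, hr⟩⟩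

theorem subsingleton_of_learner_eq_false (hH : ¬ LShatter H 2) (hp : learner H r hist a = false) :
    {g ∈ versionSpace H hist | g a = true}.Subsingleton := by
  have hV : ¬ LShatter (versionSpace H hist) 2 := fun h => hH (h.mono fun _ hg => hg.1)
  rcases Set.eq_empty_or_nonempty {g ∈ versionSpace H hist | g a = true} with h₁ | h₁
  · exact h₁ ▸ Set.subsingleton_empty
  refine (subsingleton_or_subsingleton_of_not_lShatter_two hV a).resolve_left fun h₀ => ?_
  exact Bool.false_ne_true <| hp.symm.trans <| learner_eq_true_iff.mpr ⟨h₁, .inl h₀⟩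

end Learner

section LearnerRun

variable {H : Set (X → Bool)} {r : ℕ} {h : X → Bool} {x : ℕ → X}

local notation "𝓗" => atRun (learner H r) x fun s => h (x s)
local notation "ŷ" => prediction (learner H r) x fun s => h (x s)
local notation "𝒱" t:max => versionSpace H (𝓗 t)
local notation "𝒮" => votes H (learner H r) x fun s => h (x s)

theorem rejectCount_target_le (hH : h ∈ H) (t : ℕ) : rejectCount (𝓗 t) h ≤ r := by
  induction t with
  | zero => simp [rejectCount, atRun]
  | succ t ih =>
    rw [rejectCount_atRun_succ]
    split_ifs with hfn
    · exact rejectCount_lt_of_learner_eq_false hfn.1 (mem_versionSpace_atRun hH t) hfn.2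
    · exact ih

theorem versionSpace_succ_subset_singleton (hH : h ∈ H) {t : ℕ} (hp : ŷ t = true)
    (hy : h (x t) = false) (h₀ : {g ∈ 𝒱 t | g (x t) = false}.Subsingleton) :
    𝒱 (t + 1) ⊆ {h} := fun g hg => by
  obtain ⟨hgt, hgy⟩ := mem_versionSpace_atRun_succ.mp hg
  exact h₀ ⟨hgt, (hgy hp).trans hy⟩ ⟨mem_versionSpace_atRun hH t, hy⟩

theorem card_collapse_le_one (hH : h ∈ H) (T : ℕ) :
    #{t ∈ range T | ŷ t = true ∧ h (x t) = false ∧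
      {g ∈ 𝒱 t | g (x t) = false}.Subsingleton} ≤ 1 := by
  have later (t s : ℕ) (hts : t < s) (ht : ŷ t = true ∧ h (x t) = false ∧
      {g ∈ 𝒱 t | g (x t) = false}.Subsingleton) (hy : h (x s) = false) : ŷ s = false := by
    have hs : 𝒱 s ⊆ {h} := (antitone_versionSpace_atRun hts).trans
      (versionSpace_succ_subset_singleton hH ht.1 ht.2.1 ht.2.2)
    exact learner_eq_false_of_forall fun g hg => (hs hg : g = h) ▸ hy
  refine card_le_one.mpr fun t ht s hs => ?_
  simp only [mem_filter] at ht hs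
  by_contra hne
  rcases Nat.lt_or_gt_of_ne hne with hts | hst
  · simp [later t s hts ht.2 hs.2.2.1] at hs
  · simp [later s t hst hs.2 ht.2.2.1] at ht

theorem notMem_versionSpace_succ {t : ℕ} (hp : ŷ t = true) {g : X → Bool}
    (hg : g (x t) ≠ h (x t)) : g ∉ 𝒱 (t + 1) :=
  fun hg' => hg ((mem_versionSpace_atRun_succ.mp hg').2 hp)

/-- Distinct hypotheses vote on disjoint sets of rounds: on a round where the learner predicts 0,
at most one consistent hypothesis predicts 1. -/
theorem sum_card_votes_le (hL : ¬ LShatter H 2) (T : ℕ) (G : Finset (X → Bool)) :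
    ∑ g ∈ G, #(𝒮 T g) ≤ T := by
  rw [← card_biUnion]
  · exact (card_le_card (biUnion_subset.mpr fun _ _ => filter_subset _ _)).trans
      (card_range T).le
  · intro g _ g' _ hne
    refine disjoint_filter.mpr fun s _ hs hs' => hne ?_
    exact subsingleton_of_learner_eq_false hL hs.1 ⟨hs.2.1, hs.2.2⟩ ⟨hs'.2.1, hs'.2.2⟩

theorem mul_card_eliminations_add_rejectCount_le (hL : ¬ LShatter H 2) (hH : h ∈ H) (T : ℕ) :
    r * #{t ∈ range T | ŷ t = true ∧ h (x t) = false ∧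
        ∃ g ∈ 𝒱 t, g (x t) = true ∧ r ≤ rejectCount (𝓗 t) g} +
      rejectCount (𝓗 T) h ≤ T := by
  set K := {t ∈ range T | ŷ t = true ∧ h (x t) = false ∧
    ∃ g ∈ 𝒱 t, g (x t) = true ∧ r ≤ rejectCount (𝓗 t) g}
  choose! w hw using fun t (ht : t ∈ K) => (mem_filter.mp ht).2.2.2
  have hinj : Set.InjOn w K := by
    have hne : ∀ t ∈ K, ∀ t' ∈ K, t < t' → w t ≠ w t' := fun t ht t' ht' htt' heq => by
      obtain ⟨-, hp, hy, -⟩ := mem_filter.mp ht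
      refine notMem_versionSpace_succ hp (g := w t) (by simp [(hw t ht).2.1, hy]) ?_
      exact heq ▸ antitone_versionSpace_atRun htt' (hw t' ht').1
    intro t ht t' ht' heq
    by_contra h'
    rcases Nat.lt_or_gt_of_ne h' with hlt | hgt
    exacts [hne t ht t' ht' hlt heq, hne t' ht' t ht hgt heq.symm]
  have hfresh : h ∉ K.image w := fun hmem => by
    obtain ⟨t, ht, heq⟩ := mem_image.mp hmem
    have hy := (mem_filter.mp ht).2.2.1
    simp [← heq, (hw t ht).2.1] at hy
  have hr : ∀ t ∈ K, r ≤ #(𝒮 T (w t)) := fun t ht =>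
    (hw t ht).2.2.trans <|
      rejectCount_le_card_votes (mem_range.mp (mem_filter.mp ht).1).le (hw t ht).1
  calc r * #K + rejectCount (𝓗 T) h ≤ ∑ t ∈ K, #(𝒮 T (w t)) + #(𝒮 T h) := by
        gcongr
        · simpa [mul_comm] using card_nsmul_le_sum K _ r hr
        · exact rejectCount_le_card_votes le_rfl (mem_versionSpace_atRun hH T)
    _ = ∑ g ∈ insert h (K.image w), #(𝒮 T g) := by
        rw [sum_insert hfresh, sum_image hinj, add_comm]
    _ ≤ T := sum_card_votes_le hL T _

theorem card_mistakes_le (hL : ¬ LShatter H 2) (hH : h ∈ H) (T : ℕ) :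
    ∃ a k, a ≤ r ∧ r * k + a ≤ T ∧ #{t ∈ range T | ŷ t ≠ h (x t)} ≤ a + k + 1 := by
  set A := {t ∈ range T | ŷ t = false ∧ h (x t) = true}
  set K := {t ∈ range T | ŷ t = true ∧ h (x t) = false ∧
    ∃ g ∈ 𝒱 t, g (x t) = true ∧ r ≤ rejectCount (𝓗 t) g}
  set C := {t ∈ range T | ŷ t = true ∧ h (x t) = false ∧
    {g ∈ 𝒱 t | g (x t) = false}.Subsingleton}
  have hA : #A = rejectCount (𝓗 T) h := (rejectCount_atRun T).symm
  refine ⟨#A, #K, hA ▸ rejectCount_target_le hH T,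
    hA ▸ mul_card_eliminations_add_rejectCount_le hL hH T, ?_⟩
  have hcover : {t ∈ range T | ŷ t ≠ h (x t)} ⊆ A ∪ K ∪ C := by
    intro t ht
    obtain ⟨htT, hmis⟩ := mem_filter.mp ht
    simp only [mem_union, mem_filter, A, K, C]
    cases hp : ŷ t <;> cases hy : h (x t)
    · simp_all
    · simp [htT]
    · rcases (learner_eq_true_iff.mp hp).2 with h₀ | hK
      exacts [.inr ⟨htT, rfl, rfl, h₀⟩, .inl (.inr ⟨htT, rfl, rfl, hK⟩)]
    · simp_all
  calc _ ≤ #(A ∪ K ∪ C) := card_le_card hcover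
    _ ≤ #A + #K + #C := (card_union_le _ _).trans (by gcongr; exact card_union_le _ _)
    _ ≤ #A + #K + 1 := by gcongr; exact card_collapse_le_one hH T

end LearnerRun

end AppleTasting

open AppleTasting in
/-- if L(H) = 1, there is a deterministic apple-tasting learner making at
most 1 + 2√T mistakes on any realizable stream of length T. -/
theorem deterministic_apple_tasting_Ldim_one {X : Type*} (H : Set (X → Bool))
    (hL : Ldim H = 1) (T : ℕ) :
    ∃ B : List (X × Option Bool) → X → Bool,
      ∀ h ∈ H, ∀ x : ℕ → X,
        ((((Finset.range T).filter fun t =>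
            B (atRun B x (fun s => h (x s)) t) (x t) ≠ h (x t)).card : ℝ))
          ≤ 1 + 2 * Real.sqrt T := by
  refine ⟨learner H (T.sqrt + 1), fun h hH x => ?_⟩
  obtain ⟨a, k, ha, hk, hmistakes⟩ :=
    card_mistakes_le (x := x) (not_lShatter_two_of_ldim_eq_one hL) hH T
  calc _ ≤ ((a + k + 1 : ℕ) : ℝ) := Nat.cast_le.mpr hmistakes
    _ ≤ 1 + 2 * Real.sqrt T := by push_cast; linarith [add_le_two_mul_sqrt ha hk]
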